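/- Let t : ℝ² → ℝ² be defined by t(p,s) = (1/(s·√(p²+s²)), 1/(p·√(p²+s²))). For all real numbers p, s, p', s' > 0, one has p·s ≥ p'·s' if and only if the Euclidean norm of t(p,s) is at most the Euclidean norm of t(p',s'). Hence the transformation t preserves the golden ranking: ordering transformed points by increasing distance from the origin coincides with ordering the original pairs by decreasing product p·s. -/
import Mathlib

/-- The transformation `t(p,s) = (1/(s·√(p²+s²)), 1/(p·√(p²+s²)))`. -/
noncomputable def probSimTransform (p s : ℝ) : ℝ × ℝ :=
  (1 / (s * Real.sqrt (p ^ 2 + s ^ 2)), 1 / (p * Real.sqrt (p ^ 2 + s ^ 2)))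

/-- The Euclidean norm of a point `(x, y) ∈ ℝ²` is `√(x² + y²)`. -/
noncomputable def euclNorm2 (v : ℝ × ℝ) : ℝ :=
  Real.sqrt (v.1 ^ 2 + v.2 ^ 2)

lemma norm_transform (p s : ℝ) (hp : 0 < p) (hs : 0 < s) :
    euclNorm2 (probSimTransform p s) = 1 / (p * s) := by
  have hq : (0:ℝ) < p ^ 2 + s ^ 2 := by positivity
  have hrt : Real.sqrt (p ^ 2 + s ^ 2) ^ 2 = p ^ 2 + s ^ 2 :=
    Real.sq_sqrt hq.le
  unfold euclNorm2 probSimTransform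
  rw [show (1 / (s * Real.sqrt (p ^ 2 + s ^ 2)), 1 / (p * Real.sqrt (p ^ 2 + s ^ 2))).1
      = 1 / (s * Real.sqrt (p ^ 2 + s ^ 2)) from rfl]
  have h1 : (1 / (s * Real.sqrt (p ^ 2 + s ^ 2))) ^ 2
      + (1 / (p * Real.sqrt (p ^ 2 + s ^ 2))) ^ 2 = (1 / (p * s)) ^ 2 := by
    rw [div_pow, div_pow, div_pow, mul_pow, mul_pow, mul_pow, hrt]
    field_simp
  rw [h1, Real.sqrt_sq (by positivity)]

/-- The transformation `t` preserves the golden ranking: the product `p·s` is larger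
iff the transformed point is closer to the origin. -/
theorem transform_preserves_golden_ranking (p s p' s' : ℝ)
    (hp : 0 < p) (hs : 0 < s) (hp' : 0 < p') (hs' : 0 < s') :
    p' * s' ≤ p * s ↔
      euclNorm2 (probSimTransform p s) ≤ euclNorm2 (probSimTransform p' s') := by
  rw [norm_transform p s hp hs, norm_transform p' s' hp' hs']
  constructor
  · intro h
    exact one_div_le_one_div_of_le (by positivity) h
  · intro h
    exact le_of_one_div_le_one_div (by positivity) h
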